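/- arXiv:2105.03187 — 2 statements merged into one kernel-verified Lean document; each statement's English description precedes it below -/
import Mathlib

section
/- For any vertex i of V, the diagonal entry 𝕋 i i of the generic response matrix equals 1 if and only if there is no directed cycle through i, i.e., if and only if (i,i) does not belong to the transitive closure of the edge relation of (V,E). -/
open Matrix

/-- The generic network matrix `𝔾` over the fraction field of `ℝ[Xₑ : e ∈ E]`:
`𝔾 j i = X (i,j)` if `(i,j) ∈ E`, and `0` otherwise. -/
noncomputable def genG {V : Type*} [Fintype V] [DecidableEq V] (E : Finset (V × V)) :
    Matrix V V (FractionRing (MvPolynomial {e : V × V // e ∈ E} ℝ)) :=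
  Matrix.of fun j i =>
    if h : (i, j) ∈ E then
      algebraMap (MvPolynomial {e : V × V // e ∈ E} ℝ) _ (MvPolynomial.X ⟨(i, j), h⟩)
    else 0

/-- The generic response matrix `𝕋 = (I - 𝔾)⁻¹`. -/
noncomputable def genT {V : Type*} [Fintype V] [DecidableEq V] (E : Finset (V × V)) :
    Matrix V V (FractionRing (MvPolynomial {e : V × V // e ∈ E} ℝ)) :=
  (1 - genG E)⁻¹

/-!
If `i` lies on no cycle, the vertices reachable from `i` span an invariant block of `1 - 𝔾`,
so the column `𝕋 · i` is supported on them, and the identity `𝕋 = 1 + 𝔾 𝕋` read at `(i, i)`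
only involves entries `𝔾 i a` with `a` reachable from `i`, which vanish.

Conversely, `𝕋 i i = 1` means `adj(1 - 𝔾) i i = det(1 - 𝔾)` in the polynomial ring, and this
survives the specialisation `Xₑ ↦ t` into `ℝ⟦t⟧` (the inverse itself does not: `det(1 - 𝔾)` is
no unit of the polynomial ring, only of `ℝ⟦t⟧` after specialising). There `1 - 𝔾` becomes `1 - t C` with `C` the
0/1 edge matrix, whose inverse is `∑ tᵏ Cᵏ`; a cycle of length `k` through `i` makes
`(Cᵏ) i i > 0`, so the `tᵏ` coefficient of its `(i, i)` entry is not that of `1`.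
-/

namespace Matrix

variable {n R : Type*} [Fintype n] [DecidableEq n]

theorem inv_one_sub_apply_eq_zero_of_not_reflTransGen [CommRing R] {G : Matrix n n R}
    {r : n → n → Prop} (hG : ∀ a j, ¬ r a j → G j a = 0) (hdet : IsUnit (1 - G).det) {a j : n}
    (h : ¬ Relation.ReflTransGen r a j) : (1 - G)⁻¹ j a = 0 := by
  have : Invertible (1 - G) := (1 - G).invertibleOfIsUnitDet hdet
  have hblock : (1 - G).BlockTriangular fun x => ¬ Relation.ReflTransGen r a x := by
    intro y x hxy
    obtain ⟨hx, hy⟩ : Relation.ReflTransGen r a x ∧ ¬ Relation.ReflTransGen r a y := by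
      simp only [lt_iff_le_not_ge, le_Prop_eq] at hxy; tauto
    have hne : y ≠ x := by rintro rfl; exact hy hx
    rw [sub_apply, one_apply_ne hne, hG x y fun hr => hy (hx.tail hr), sub_zero]
  exact blockTriangular_inv_of_blockTriangular hblock <| by
    simp only [lt_iff_le_not_ge, le_Prop_eq]; tauto

theorem inv_one_sub_apply_self_eq_one [CommRing R] {G : Matrix n n R} {r : n → n → Prop}
    (hG : ∀ a j, ¬ r a j → G j a = 0) (hdet : IsUnit (1 - G).det) {i : n}
    (h : ¬ Relation.TransGen r i i) : (1 - G)⁻¹ i i = 1 := by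
  have hT : (1 - G)⁻¹ = 1 + G * (1 - G)⁻¹ := by
    rw [← sub_eq_iff_eq_add, ← one_sub_mul, mul_nonsing_inv _ hdet]
  rw [hT, add_apply, one_apply_eq, add_eq_left, mul_apply]
  refine Finset.sum_eq_zero fun a _ => ?_
  by_cases hr : r a i
  · rw [inv_one_sub_apply_eq_zero_of_not_reflTransGen hG hdet fun hia => h (.tail' hia hr),
      mul_zero]
  · rw [hG a i hr, zero_mul]

theorem inv_map_apply_eq_one_iff {S : Type*} [CommRing R] [CommRing S] {M : Matrix n n R}
    (f : R →+* S) (hdet : IsUnit (M.map f).det) (i j : n) :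
    (M.map f)⁻¹ i j = 1 ↔ f (M.adjugate i j) = f M.det := by
  rw [inv_def, smul_apply, smul_eq_mul, Ring.inverse_mul_eq_iff_eq_mul _ _ _ hdet, mul_one,
    ← RingHom.mapMatrix_apply, ← RingHom.map_adjugate, ← RingHom.map_det]
  rfl

theorem exists_pow_apply_pos_of_transGen [Semiring R] [PartialOrder R] [IsStrictOrderedRing R]
    {C : Matrix n n R} (hC : ∀ j a, 0 ≤ C j a) {a b : n}
    (h : Relation.TransGen (fun a j => 0 < C j a) a b) : ∃ k, 0 < (C ^ (k + 1)) b a := by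
  induction h with
  | single hab => exact ⟨0, by simpa using hab⟩
  | @tail b c _ hbc ih =>
    obtain ⟨k, hk⟩ := ih
    refine ⟨k + 1, ?_⟩
    rw [pow_succ', mul_apply]
    exact Finset.sum_pos' (fun x _ => mul_nonneg (hC c x) (pow_apply_nonneg hC _ x a))
      ⟨b, Finset.mem_univ b, mul_pos hbc hk⟩

open PowerSeries

theorem one_sub_X_smul_mul_mk_pow [CommRing R] (C : Matrix n n R) :
    (1 - (X : R⟦X⟧) • C.map PowerSeries.C) * of (fun j a => mk fun k => (C ^ k) j a) = 1 := by
  have hshift : C.map PowerSeries.C * of (fun j a => mk fun k => (C ^ k) j a) =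
      of fun j a => mk fun k => (C ^ (k + 1)) j a := by
    ext j a k
    simp [mul_apply, map_sum, coeff_C_mul, pow_succ' C k]
  rw [sub_mul, one_mul, smul_mul, hshift, sub_eq_iff_eq_add]
  ext j a k
  by_cases hja : j = a <;> rcases k with _ | k <;> simp [hja, coeff_succ_X_mul, coeff_one]

theorem inv_one_sub_X_smul_apply_self_ne_one [CommRing R] [PartialOrder R]
    [IsStrictOrderedRing R] {C : Matrix n n R} (hC : ∀ j a, 0 ≤ C j a) {i : n}
    (h : Relation.TransGen (fun a j => 0 < C j a) i i) :
    (1 - (X : R⟦X⟧) • C.map PowerSeries.C)⁻¹ i i ≠ 1 := by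
  obtain ⟨k, hk⟩ := exists_pow_apply_pos_of_transGen hC h
  rw [inv_eq_right_inv (one_sub_X_smul_mul_mk_pow C)]
  intro h1
  have hcoeff : (C ^ (k + 1)) i i = 0 := by
    simpa [coeff_one] using congrArg (coeff (k + 1)) h1
  exact hk.ne' hcoeff

end Matrix

section GenericNetwork

open PowerSeries

variable {V : Type*} [DecidableEq V] (E : Finset (V × V))

noncomputable def genGPoly : Matrix V V (MvPolynomial {e : V × V // e ∈ E} ℝ) :=
  of fun j i => if h : (i, j) ∈ E then MvPolynomial.X ⟨(i, j), h⟩ else 0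

def edgeMatrix : Matrix V V ℝ :=
  of fun j i => if (i, j) ∈ E then 1 else 0

noncomputable def evalAllX : MvPolynomial {e : V × V // e ∈ E} ℝ →+* ℝ⟦X⟧ :=
  MvPolynomial.eval₂Hom PowerSeries.C fun _ => X

theorem edgeMatrix_nonneg (j i : V) : 0 ≤ edgeMatrix E j i := by
  simp only [edgeMatrix, of_apply]
  split_ifs <;> simp

theorem one_sub_genGPoly_map_evalAllX :
    (1 - genGPoly E).map (evalAllX E) = 1 - (X : ℝ⟦X⟧) • (edgeMatrix E).map PowerSeries.C := by
  ext j i : 1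
  by_cases h : (i, j) ∈ E <;> rcases eq_or_ne j i with rfl | hji <;>
    simp [genGPoly, edgeMatrix, evalAllX, one_apply, *]

variable [Fintype V]

theorem isUnit_det_one_sub_genGPoly_map_evalAllX :
    IsUnit ((1 - genGPoly E).map (evalAllX E)).det := by
  rw [one_sub_genGPoly_map_evalAllX]
  exact isUnit_det_of_right_inverse (one_sub_X_smul_mul_mk_pow _)

theorem one_sub_genG_eq_map :
    1 - genG E = (1 - genGPoly E).map (algebraMap _ (FractionRing _)) := by
  ext j i : 1
  by_cases h : (i, j) ∈ E <;> rcases eq_or_ne j i with rfl | hji <;>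
    simp [genG, genGPoly, one_apply, *]

theorem det_one_sub_genGPoly_ne_zero : (1 - genGPoly E).det ≠ 0 := fun hdet =>
  (isUnit_det_one_sub_genGPoly_map_evalAllX E).ne_zero <| by
    rw [← RingHom.mapMatrix_apply, ← RingHom.map_det, hdet, map_zero]

theorem isUnit_det_one_sub_genG : IsUnit (1 - genG E).det := by
  rw [one_sub_genG_eq_map, ← RingHom.mapMatrix_apply, ← RingHom.map_det, isUnit_iff_ne_zero]
  exact (map_ne_zero_iff _ (IsFractionRing.injective _ _)).2 (det_one_sub_genGPoly_ne_zero E)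

theorem genT_apply_eq_one_iff (i j : V) :
    genT E i j = 1 ↔ (1 - genGPoly E).adjugate i j = (1 - genGPoly E).det := by
  rw [genT, one_sub_genG_eq_map,
    inv_map_apply_eq_one_iff _ (one_sub_genG_eq_map E ▸ isUnit_det_one_sub_genG E),
    (IsFractionRing.injective _ _).eq_iff]

end GenericNetwork

theorem stmt_4_general {V : Type*} [Fintype V] [DecidableEq V]
    (E : Finset (V × V)) :
    ∀ i : V,
      (genT E i i = 1 ↔ ¬ Relation.TransGen (fun a b : V => (a, b) ∈ E) i i) := by
  intro i
  constructor
  · intro hT hcycle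
    rw [genT_apply_eq_one_iff] at hT
    refine inv_one_sub_X_smul_apply_self_ne_one (edgeMatrix_nonneg E)
      (Relation.TransGen.mono (fun a j h => by simp [edgeMatrix, h]) _ _ hcycle) ?_
    rw [← one_sub_genGPoly_map_evalAllX,
      inv_map_apply_eq_one_iff _ (isUnit_det_one_sub_genGPoly_map_evalAllX E), hT]
  · exact inv_one_sub_apply_self_eq_one (G := genG E) (fun a j h => by simp [genG, h])
      (isUnit_det_one_sub_genG E)

/-- For any vertex `i`, the diagonal generic entry `𝕋 i i` equals `1` iff there is no
directed cycle through `i`, i.e. iff `(i,i)` is not in the transitive closure of `E`. -/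
theorem stmt_4 {V : Type*} [Fintype V] [DecidableEq V]
    (E : Finset (V × V)) (hloop : ∀ i : V, (i, i) ∉ E) :
    ∀ i : V,
      (genT E i i = 1 ↔ ¬ Relation.TransGen (fun a b : V => (a, b) ∈ E) i i) :=
  stmt_4_general E
end

section
/- Let F be a field, L ≥ 3, V = ZMod L, and let G : Matrix V V F have G (u+1) u = g u ≠ 0 for all u ∈ V and all other entries zero, with φ = ∏_{u ∈ V} g u satisfying φ ≠ 1. Write T = (I − G)⁻¹. Then for any vertices represented by integers 1 ≤ k < i ≤ j ≤ L, the entries T k 1, T j i are nonzero and T j 1 · (T k 1)⁻¹ · T k i · (T j i)⁻¹ = φ. -/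
/-!
The resolvent of the cycle is explicit: `(I - G)⁻¹ a b = (1 - φ)⁻¹ · P(b → a)`, where `P(b → a)` is
the product of the modules along the unique path from `b` to `a` of length `(a - b).val`; one
checks `(I - G) S = I` row by row, since extending the path from `b` to `a - 1` by one edge gives
the path to `a`, or the whole cycle when `a = b`. For `1 ≤ k < i ≤ j ≤ L` the paths `1 → j` and
`i → k` together traverse the paths `1 → k` and `i → j` plus one full turn of the cycle, so the
cross ratio of the four entries is `φ`.
-/

open Matrix Finset

namespace ZMod

lemma val_sub_one_add_one {n : ℕ} [NeZero n] (x : ZMod n) :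
    (x - 1).val + 1 = if x = 0 then n else x.val := by
  have hn : 1 ≤ n := Nat.one_le_iff_ne_zero.2 (NeZero.ne n)
  split_ifs with hx
  · have : x - 1 = ((n - 1 : ℕ) : ZMod n) := by simp [hx, Nat.cast_sub hn]
    rw [this, val_natCast_of_lt (by omega)]
    omega
  · have hv : 1 ≤ x.val := Nat.one_le_iff_ne_zero.2 ((val_ne_zero x).2 hx)
    have : x - 1 = ((x.val - 1 : ℕ) : ZMod n) := by simp [Nat.cast_sub hv]
    rw [this, val_natCast_of_lt (by have := val_lt x; omega)]
    omega

lemma val_natCast_sub_natCast {n a b : ℕ} (hba : b ≤ a) (hab : a < b + n) :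
    ((a : ZMod n) - b).val = a - b := by
  rw [← Nat.cast_sub hba, val_natCast_of_lt (by omega)]

lemma prod_range_natCast {M : Type*} [CommMonoid M] (n : ℕ) [NeZero n] (f : ZMod n → M) :
    ∏ t ∈ range n, f t = ∏ x, f x :=
  prod_nbij' (fun t => t) val (fun _ _ => mem_univ _) (fun x _ => mem_range.2 (val_lt x))
    (fun _ ht => val_natCast_of_lt (mem_range.1 ht)) (fun x _ => natCast_zmod_val x) fun _ _ => rfl

end ZMod

section Cycle

variable {L : ℕ}

def pathProd {M : Type*} [CommMonoid M] (g : ZMod L → M) (b : ZMod L) (n : ℕ) : M :=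
  ∏ t ∈ range n, g (b + t)

section CommMonoid

variable {M : Type*} [CommMonoid M] (g : ZMod L → M)

@[simp] lemma pathProd_zero (b : ZMod L) : pathProd g b 0 = 1 := prod_range_zero _

lemma pathProd_succ (b : ZMod L) (n : ℕ) : pathProd g b (n + 1) = pathProd g b n * g (b + n) :=
  prod_range_succ _ _

lemma pathProd_add (b : ZMod L) (m n : ℕ) :
    pathProd g b (m + n) = pathProd g b m * pathProd g (b + m) n := by
  simp only [pathProd, prod_range_add, Nat.cast_add, add_assoc]

lemma pathProd_trans {a b c : ℕ} (hab : a ≤ b) (hbc : b ≤ c) :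
    pathProd g a (b - a) * pathProd g b (c - b) = pathProd g a (c - a) := by
  rw [show c - a = (b - a) + (c - b) by omega, pathProd_add, ← Nat.cast_add,
    Nat.add_sub_cancel' hab]

lemma pathProd_self [NeZero L] (b : ZMod L) : pathProd g b L = ∏ u, g u := by
  rw [pathProd, ZMod.prod_range_natCast L fun t => g (b + t)]
  exact Fintype.prod_equiv (Equiv.addLeft b) _ _ fun _ => rfl

end CommMonoid

lemma pathProd_ne_zero {M : Type*} [CommMonoidWithZero M] [NoZeroDivisors M] [Nontrivial M]
    {g : ZMod L → M} (hg : ∀ u, g u ≠ 0) (b : ZMod L) (n : ℕ) : pathProd g b n ≠ 0 :=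
  prod_ne_zero_iff.2 fun _ _ => hg _

def cycleMatrix {R : Type*} [Zero R] (g : ZMod L → R) : Matrix (ZMod L) (ZMod L) R :=
  of fun j i => if j = i + 1 then g i else 0

lemma cycleMatrix_mul_apply {R : Type*} [NonUnitalNonAssocSemiring R] [NeZero L] (g : ZMod L → R)
    (S : Matrix (ZMod L) (ZMod L) R) (a b : ZMod L) :
    (cycleMatrix g * S) a b = g (a - 1) * S (a - 1) b := by
  simp [cycleMatrix, mul_apply, eq_comm (a := a), ← eq_sub_iff_add_eq]

variable {F : Type*} [Field F] [NeZero L] (g : ZMod L → F)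

def cycleResolvent : Matrix (ZMod L) (ZMod L) F :=
  of fun a b => pathProd g b (a - b).val * (1 - ∏ u, g u)⁻¹

lemma one_sub_cycleMatrix_mul_cycleResolvent (hφ : ∏ u, g u ≠ 1) :
    (1 - cycleMatrix g) * cycleResolvent g = 1 := by
  ext a b
  have hstep : g (a - 1) * pathProd g b (a - 1 - b).val =
      if a = b then ∏ u, g u else pathProd g b (a - b).val := by
    have h := pathProd_succ g b (a - 1 - b).val
    rw [ZMod.natCast_zmod_val, add_sub_cancel, sub_right_comm, ZMod.val_sub_one_add_one] at h
    rw [mul_comm, sub_right_comm, ← h]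
    by_cases hab : a = b <;> simp [hab, sub_eq_zero, pathProd_self]
  rw [sub_mul, one_mul, Matrix.sub_apply, cycleMatrix_mul_apply, cycleResolvent, of_apply, of_apply,
    ← mul_assoc, hstep]
  split_ifs with hab
  · subst hab
    rw [sub_self, ZMod.val_zero, pathProd_zero, one_apply_eq, one_mul, ← one_sub_mul,
      mul_inv_cancel₀ (sub_ne_zero.2 hφ.symm)]
  · rw [sub_self, one_apply_ne hab]

lemma inv_one_sub_cycleMatrix (hφ : ∏ u, g u ≠ 1) :
    (1 - cycleMatrix g)⁻¹ = cycleResolvent g :=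
  inv_eq_right_inv (one_sub_cycleMatrix_mul_cycleResolvent g hφ)

lemma cycleResolvent_natCast {a b : ℕ} (hba : b ≤ a) (hab : a < b + L) :
    cycleResolvent g a b = pathProd g b (a - b) * (1 - ∏ u, g u)⁻¹ := by
  rw [cycleResolvent, of_apply, ZMod.val_natCast_sub_natCast hba hab]

end Cycle

theorem stmt_16_general (F : Type*) [Field F] (L : ℕ) [NeZero L]
    (g : ZMod L → F) (hg : ∀ u : ZMod L, g u ≠ 0)
    (G : Matrix (ZMod L) (ZMod L) F)
    (hG : ∀ j i : ZMod L, G j i = if j = i + 1 then g i else 0)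
    (φ : F) (hφdef : φ = ∏ u : ZMod L, g u) (hφ : φ ≠ 1)
    (T : Matrix (ZMod L) (ZMod L) F) (hT : T = (1 - G)⁻¹)
    (k i j : ℕ) (hk : 1 ≤ k) (hki : k < i) (hij : i ≤ j) (hjL : j ≤ L) :
    T (k : ZMod L) (1 : ZMod L) ≠ 0 ∧ T (j : ZMod L) (i : ZMod L) ≠ 0 ∧
      T (j : ZMod L) (1 : ZMod L) * (T (k : ZMod L) (1 : ZMod L))⁻¹ *
        T (k : ZMod L) (i : ZMod L) * (T (j : ZMod L) (i : ZMod L))⁻¹ = φ := by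
  obtain rfl : G = cycleMatrix g := ext hG
  subst hφdef hT
  rw [inv_one_sub_cycleMatrix g hφ]
  have hc : (1 - ∏ u, g u)⁻¹ ≠ 0 := inv_ne_zero (sub_ne_zero.2 hφ.symm)
  have hTk1 := cycleResolvent_natCast g (a := k) (b := 1) hk (by omega)
  have hTj1 := cycleResolvent_natCast g (a := j) (b := 1) (by omega) (by omega)
  have hTji := cycleResolvent_natCast g hij (by omega)
  -- `T k i` is read along the path from `i` to `k + L ≡ k`, which winds past `L`
  have hTki := cycleResolvent_natCast g (a := k + L) (b := i) (by omega) (by omega)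
  rw [Nat.cast_one] at hTk1 hTj1
  rw [Nat.cast_add, ZMod.natCast_self, add_zero] at hTki
  have hsplit : pathProd g 1 (j - 1) =
      pathProd g 1 (k - 1) * (pathProd g k (i - k) * pathProd g i (j - i)) := by
    rw [pathProd_trans g hki.le hij, ← Nat.cast_one, pathProd_trans g hk (hki.le.trans hij)]
  have hloop : pathProd g k (i - k) * pathProd g i (k + L - i) = ∏ u, g u := by
    rw [pathProd_trans g hki.le (by omega), Nat.add_sub_cancel_left, pathProd_self]
  refine ⟨?_, ?_, ?_⟩
  · rw [hTk1]; exact mul_ne_zero (pathProd_ne_zero hg _ _) hc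
  · rw [hTji]; exact mul_ne_zero (pathProd_ne_zero hg _ _) hc
  rw [hTk1, hTj1, hTji, hTki, hsplit]
  have hPk := pathProd_ne_zero hg (1 : ZMod L) (k - 1)
  have hPij := pathProd_ne_zero hg (i : ZMod L) (j - i)
  field_simp
  exact hloop

/-- In a directed circular network on `ZMod L` (`L ≥ 3`) with nonzero cycle modules `g u`
on the positions `(u+1, u)` and loop transfer function `φ = ∏ u, g u ≠ 1`, writing
`T = (I - G)⁻¹`, for any vertex labels `1 ≤ k < i ≤ j ≤ L` the entries `T k 1` and
`T j i` are nonzero and `T j 1 · (T k 1)⁻¹ · T k i · (T j i)⁻¹ = φ`. -/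
theorem stmt_16 (F : Type*) [Field F] (L : ℕ) [NeZero L] (hL : 3 ≤ L)
    (g : ZMod L → F) (hg : ∀ u : ZMod L, g u ≠ 0)
    (G : Matrix (ZMod L) (ZMod L) F)
    (hG : ∀ j i : ZMod L, G j i = if j = i + 1 then g i else 0)
    (φ : F) (hφdef : φ = ∏ u : ZMod L, g u) (hφ : φ ≠ 1)
    (T : Matrix (ZMod L) (ZMod L) F) (hT : T = (1 - G)⁻¹)
    (k i j : ℕ) (hk : 1 ≤ k) (hki : k < i) (hij : i ≤ j) (hjL : j ≤ L) :
    T (k : ZMod L) (1 : ZMod L) ≠ 0 ∧ T (j : ZMod L) (i : ZMod L) ≠ 0 ∧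
      T (j : ZMod L) (1 : ZMod L) * (T (k : ZMod L) (1 : ZMod L))⁻¹ *
        T (k : ZMod L) (i : ZMod L) * (T (j : ZMod L) (i : ZMod L))⁻¹ = φ :=
  stmt_16_general F L g hg G hG φ hφdef hφ T hT k i j hk hki hij hjL
end
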